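/- arXiv:2310.08450 — 6 statements merged into one kernel-verified Lean document; each statement's English description precedes it below -/
import Mathlib

section
/- Let Ω ⊆ ℝ^d be a convex set and let u : Ω → ℝ be any function. Suppose that for every x ∈ Ω there exists a nonzero vector p ∈ ℝ^d such that for all y ∈ Ω, (y − x) · p ≤ 0 implies u(y) ≤ u(x). Then u is quasiconcave on Ω. -/
/-! A linear functional `f` takes at a convex combination `z` of `x` and `y` a value at least
`min (f x) (f y)`, so one of `x`, `y` lies in the half-space `{f ≤ f z}` and hence has
`u`-value at most `u z`. -/

theorem Convex.quasiconcaveOn_of_forall_exists_linearMap {𝕜 E β : Type*} [Field 𝕜] [LinearOrder 𝕜]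
    [IsStrictOrderedRing 𝕜] [AddCommGroup E] [Module 𝕜 E] [LinearOrder β] {s : Set E}
    (hs : Convex 𝕜 s) {u : E → β}
    (h : ∀ z ∈ s, ∃ f : E →ₗ[𝕜] 𝕜, ∀ y ∈ s, f y ≤ f z → u y ≤ u z) :
    QuasiconcaveOn 𝕜 s u := by
  refine quasiconcaveOn_iff_min_le.2 ⟨hs, fun x hx y hy a b ha hb hab => ?_⟩
  obtain ⟨f, hf⟩ := h _ (hs hx hy ha hb hab)
  have hmin : min (f x) (f y) ≤ f (a • x + b • y) := by
    simpa only [map_add, map_smul] using Convex.min_le_combo (f x) (f y) ha hb hab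
  rcases min_le_iff.1 hmin with hfx | hfy
  · exact min_le_of_left_le (hf x hx hfx)
  · exact min_le_of_right_le (hf y hy hfy)

/-- If for every `x ∈ Ω` (convex) there is a nonzero `p` such that
`(y − x) · p ≤ 0 → u(y) ≤ u(x)` for all `y ∈ Ω`, then `u` is quasiconcave on `Ω`. -/
theorem stmt_1 {d : ℕ} (Ω : Set (EuclideanSpace ℝ (Fin d))) (hΩc : Convex ℝ Ω)
    (u : EuclideanSpace ℝ (Fin d) → ℝ)
    (h : ∀ x ∈ Ω, ∃ p : EuclideanSpace ℝ (Fin d), p ≠ 0 ∧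
      ∀ y ∈ Ω, (inner ℝ (y - x) p : ℝ) ≤ 0 → u y ≤ u x) :
    ∀ x ∈ Ω, ∀ y ∈ Ω, ∀ l : ℝ, 0 < l → l < 1 →
      min (u x) (u y) ≤ u (l • x + (1 - l) • y) := by
  have hu : QuasiconcaveOn ℝ Ω u := hΩc.quasiconcaveOn_of_forall_exists_linearMap fun z hz => by
    obtain ⟨p, -, hp⟩ := h z hz
    refine ⟨innerₛₗ ℝ p, fun y hy hyz => hp y hy ?_⟩
    rw [innerₛₗ_apply_apply, innerₛₗ_apply_apply] at hyz
    rw [inner_sub_left, real_inner_comm p y, real_inner_comm p z]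
    linarith
  intro x hx y hy l hl0 hl1
  exact (quasiconcaveOn_iff_min_le.1 hu).2 hx hy hl0.le (by linarith) (by ring)
end

section
/- Let Ω ⊆ ℝ^d be a convex set and let u : Ω → ℝ be any function. Suppose that for every x ∈ Ω there exists a nonzero vector p ∈ ℝ^d such that for every y ∈ Ω with y ≠ x, (y − x) · p ≤ 0 implies u(y) < u(x). Then u is strictly quasiconcave on Ω. -/
section Segment

variable {𝕜 E : Type*} [Field 𝕜] [LinearOrder 𝕜] [IsStrictOrderedRing 𝕜] [AddCommGroup E]
  [Module 𝕜 E]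

/-- `a • (x - z) + b • (y - z) = 0` for the weights `a, b ≥ 0` of `z`, so `f (x - z)` and
`f (y - z)` cannot both be positive. -/
theorem LinearMap.map_sub_nonpos_or_of_mem_segment (f : E →ₗ[𝕜] 𝕜) {x y z : E}
    (hz : z ∈ segment 𝕜 x y) : f (x - z) ≤ 0 ∨ f (y - z) ≤ 0 := by
  obtain ⟨a, b, ha, hb, hab, hz⟩ := hz
  have hcomb : a • (x - z) + b • (y - z) = 0 :=
    calc a • (x - z) + b • (y - z) = (a • x + b • y) - (a + b) • z := by module
      _ = 0 := by rw [hz, hab, one_smul, sub_self]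
  have hsum : a * f (x - z) + b * f (y - z) = 0 := by
    simpa using congrArg f hcomb
  by_contra! hpos
  have hmin := lt_min hpos.1 hpos.2
  nlinarith [mul_le_mul_of_nonneg_left (min_le_left (f (x - z)) (f (y - z))) ha,
    mul_le_mul_of_nonneg_left (min_le_right (f (x - z)) (f (y - z))) hb]

theorem min_lt_of_mem_openSegment_of_forall_exists_linearMap {β : Type*} [LinearOrder β]
    {Ω : Set E} (hΩ : Convex 𝕜 Ω) {u : E → β}
    (h : ∀ x ∈ Ω, ∃ f : E →ₗ[𝕜] 𝕜, ∀ y ∈ Ω, y ≠ x → f (y - x) ≤ 0 → u y < u x)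
    {x y z : E} (hx : x ∈ Ω) (hy : y ∈ Ω) (hxy : x ≠ y) (hz : z ∈ openSegment 𝕜 x y) :
    min (u x) (u y) < u z := by
  obtain ⟨f, hf⟩ := h z (hΩ.openSegment_subset hx hy hz)
  have hxz : x ≠ z := by
    rintro rfl
    exact hxy (left_mem_openSegment_iff.mp hz)
  have hyz : y ≠ z := by
    rintro rfl
    exact hxy (right_mem_openSegment_iff.mp hz)
  rcases f.map_sub_nonpos_or_of_mem_segment (openSegment_subset_segment 𝕜 x y hz) with hfx | hfy
  · exact (min_le_left _ _).trans_lt (hf x hx hxz hfx)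
  · exact (min_le_right _ _).trans_lt (hf y hy hyz hfy)

end Segment

/-- If for every `x ∈ Ω` (convex) there is a nonzero `p` such that for
`y ∈ Ω`, `y ≠ x`, `(y − x) · p ≤ 0 → u(y) < u(x)`, then `u` is strictly quasiconcave
on `Ω`. -/
theorem stmt_4 {d : ℕ} (Ω : Set (EuclideanSpace ℝ (Fin d))) (hΩc : Convex ℝ Ω)
    (u : EuclideanSpace ℝ (Fin d) → ℝ)
    (h : ∀ x ∈ Ω, ∃ p : EuclideanSpace ℝ (Fin d), p ≠ 0 ∧
      ∀ y ∈ Ω, y ≠ x → (inner ℝ (y - x) p : ℝ) ≤ 0 → u y < u x) :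
    ∀ x ∈ Ω, ∀ y ∈ Ω, x ≠ y → ∀ l : ℝ, 0 < l → l < 1 →
      min (u x) (u y) < u (l • x + (1 - l) • y) := by
  intro x hx y hy hxy l hl0 hl1
  refine min_lt_of_mem_openSegment_of_forall_exists_linearMap hΩc (fun z hz => ?_) hx hy hxy
    ⟨l, 1 - l, hl0, sub_pos.mpr hl1, add_sub_cancel l 1, rfl⟩
  obtain ⟨p, -, hp⟩ := h z hz
  exact ⟨(innerₛₗ ℝ).flip p, hp⟩
end

section
/- Let Ω ⊆ ℝ^d be an open convex set and let u : Ω → ℝ be continuously differentiable. Suppose that for all x, y ∈ Ω with x ≠ y, (y − x) · ∇u(x) ≤ 0 implies u(y) < u(x). Then u is strictly quasiconcave on Ω. -/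
/-! A point `z` strictly between `x ≠ y` splits `x - z` and `y - z` into opposite directions, so
`⟪x - z, ∇u(z)⟫` and `⟪y - z, ∇u(z)⟫` cannot both be positive. Applying the hypothesis at `z` in
the direction with nonpositive slope gives `u x < u z` or `u y < u z`. -/

theorem inner_sub_nonpos_or_of_mem_segment {E : Type*} [NormedAddCommGroup E]
    [InnerProductSpace ℝ E] {x y z : E} (g : E) (hz : z ∈ segment ℝ x y) :
    inner ℝ (x - z) g ≤ 0 ∨ inner ℝ (y - z) g ≤ 0 := by
  obtain ⟨a, b, ha, hb, hab, rfl⟩ := hz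
  set z := a • x + b • y
  have hsum : a * inner ℝ (x - z) g + b * inner ℝ (y - z) g = 0 := by
    rw [← real_inner_smul_left, ← real_inner_smul_left, ← inner_add_left, smul_sub, smul_sub,
      sub_add_sub_comm, ← add_smul, hab, one_smul, sub_self, inner_zero_left]
  by_contra! ⟨hx, hy⟩
  obtain ⟨ha0, hb0⟩ :=
    (add_eq_zero_iff_of_nonneg (mul_nonneg ha hx.le) (mul_nonneg hb hy.le)).mp hsum
  rw [mul_eq_zero, or_iff_left hx.ne'] at ha0
  rw [mul_eq_zero, or_iff_left hy.ne'] at hb0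
  simp only [ha0, hb0, add_zero, zero_ne_one] at hab

theorem stmt_5_general {d : ℕ} (Ω : Set (EuclideanSpace ℝ (Fin d)))
    (hΩc : Convex ℝ Ω)
    (u : EuclideanSpace ℝ (Fin d) → ℝ)
    (h : ∀ x ∈ Ω, ∀ y ∈ Ω, x ≠ y → (inner ℝ (y - x) (gradient u x) : ℝ) ≤ 0 → u y < u x) :
    ∀ x ∈ Ω, ∀ y ∈ Ω, x ≠ y → ∀ l : ℝ, 0 < l → l < 1 →
      min (u x) (u y) < u (l • x + (1 - l) • y) := by
  intro x hx y hy hxy l hl0 hl1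
  set z := l • x + (1 - l) • y
  have hz : z ∈ openSegment ℝ x y := ⟨l, 1 - l, hl0, sub_pos.mpr hl1, by ring, rfl⟩
  have hzΩ : z ∈ Ω := hΩc.openSegment_subset hx hy hz
  have hzx : z ≠ x := fun hzx => hxy (left_mem_openSegment_iff.mp (hzx ▸ hz))
  have hzy : z ≠ y := fun hzy => hxy (right_mem_openSegment_iff.mp (hzy ▸ hz))
  rcases inner_sub_nonpos_or_of_mem_segment (gradient u z) (openSegment_subset_segment _ _ _ hz)
    with hxz | hyz
  · exact (min_le_left _ _).trans_lt (h z hzΩ x hx hzx hxz)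
  · exact (min_le_right _ _).trans_lt (h z hzΩ y hy hzy hyz)

/-- If `u` is `C¹` on an open convex `Ω` and for all `x ≠ y` in `Ω`,
`(y − x) · ∇u(x) ≤ 0` implies `u(y) < u(x)`, then `u` is strictly quasiconcave on `Ω`. -/
theorem stmt_5 {d : ℕ} (Ω : Set (EuclideanSpace ℝ (Fin d)))
    (hΩo : IsOpen Ω) (hΩc : Convex ℝ Ω)
    (u : EuclideanSpace ℝ (Fin d) → ℝ) (hu : ContDiffOn ℝ 1 u Ω)
    (h : ∀ x ∈ Ω, ∀ y ∈ Ω, x ≠ y → (inner ℝ (y - x) (gradient u x) : ℝ) ≤ 0 → u y < u x) :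
    ∀ x ∈ Ω, ∀ y ∈ Ω, x ≠ y → ∀ l : ℝ, 0 < l → l < 1 →
      min (u x) (u y) < u (l • x + (1 - l) • y) :=
  stmt_5_general Ω hΩc u h
end

section
/- Let x₀ ∈ ℝ², let φ : ℝ² → ℝ be a smooth quasiconcave function on ℝ² with ∇φ(x₀) ≠ 0, let N ⊆ ℝ² \ {x₀} be a nonempty finite set, and set V := {y − x₀ : y ∈ N}. Assume V is symmetric in the sense that (i) p ∈ V implies −p ∈ V, and (ii) for every p ∈ V there exists q ∈ V with p · q = 0. Then there exists p ∈ ℝ² with −p ∈ V such that for every y ∈ N, p · (y − x₀) < 0 implies φ(y) ≤ φ(x₀); that is, the discrete subdifferential P(φ, φ(x₀), x₀) is nonempty. -/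
lemma aux_grad (φ : EuclideanSpace ℝ (Fin 2) → ℝ) (hφ : ContDiff ℝ (⊤ : ℕ∞) φ)
    (hqc : ∀ x y : EuclideanSpace ℝ (Fin 2), ∀ l : ℝ, 0 < l → l < 1 →
      min (φ x) (φ y) ≤ φ (l • x + (1 - l) • y))
    (x₀ y : EuclideanSpace ℝ (Fin 2))
    (h : (inner ℝ (gradient φ x₀) (y - x₀) : ℝ) < 0) : φ y ≤ φ x₀ := by
  by_contra hc
  push_neg at hc
  set v := y - x₀ with hv
  have hd : (inner ℝ (gradient φ x₀) v : ℝ) = fderiv ℝ φ x₀ v := by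
    rw [gradient, InnerProductSpace.toDual_symm_apply]
  have hline : HasDerivAt (fun l : ℝ => x₀ + l • v) v 0 := by
    simpa using ((hasDerivAt_id (0:ℝ)).smul_const v).const_add x₀
  have hφd : HasFDerivAt φ (fderiv ℝ φ x₀) ((fun l : ℝ => x₀ + l • v) 0) := by
    simpa using (hφ.differentiable (by simp) x₀).hasFDerivAt
  have hf : HasDerivAt (fun l : ℝ => φ (x₀ + l • v)) (fderiv ℝ φ x₀ v) 0 :=
    hφd.comp_hasDerivAt 0 hline
  have hf' : HasDerivWithinAt (fun l : ℝ => φ (x₀ + l • v)) (fderiv ℝ φ x₀ v)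
      (Set.Ioi 0) 0 := hf.hasDerivWithinAt
  have hslope := hasDerivWithinAt_iff_tendsto_slope.mp hf'
  rw [Set.diff_singleton_eq_self (by simp)] at hslope
  have hD : fderiv ℝ φ x₀ v < 0 := hd ▸ h
  have hev : ∀ᶠ l in nhdsWithin (0:ℝ) (Set.Ioi 0),
      slope (fun l : ℝ => φ (x₀ + l • v)) 0 l < 0 :=
    hslope.eventually_lt_const hD
  have hmem : Set.Ioo (0:ℝ) 1 ∈ nhdsWithin (0:ℝ) (Set.Ioi 0) :=
    Ioo_mem_nhdsGT_of_mem (by norm_num)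
  obtain ⟨l, hsl, hl⟩ := (hev.and (Filter.eventually_of_mem hmem fun x hx => hx)).exists
  rw [slope_def_field] at hsl
  have hf0 : φ (x₀ + (0:ℝ) • v) = φ x₀ := by simp
  have hfl : φ (x₀ + l • v) < φ x₀ := by
    rw [hf0] at hsl
    rcases div_neg_iff.mp (by simpa using hsl) with ⟨h1, h2⟩ | ⟨h1, h2⟩
    · linarith [hl.1]
    · linarith
  have heq : x₀ + l • v = l • y + (1 - l) • x₀ := by rw [hv]; module
  have := hqc y x₀ l hl.1 hl.2
  rw [min_eq_right hc.le, ← heq] at this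
  linarith

lemma aux_key (S T A B C G P Vn Q : ℝ) (hG : 0 < G) (hP : 0 < P) (hV : 0 < Vn) (hQ : 0 < Q)
    (f1 : S^2 + T^2 = G*P) (f2 : A^2 + B^2 = G*Vn) (f8 : A^2*Q + C^2*Vn = G*Vn*Q)
    (f4 : 0 ≤ A) (f6 : 0 ≤ S) (m1 : A^2*P ≤ S^2*Vn) (m2 : C^2*P ≤ S^2*Q)
    (f3 : S*A + T*B < 0) : False := by
  have e1 : B^2*Q = C^2*Vn := by linear_combination Q*f2 - f8
  have hB : B^2*P ≤ S^2*Vn := by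
    have h1 : B^2*P*Q = C^2*P*Vn := by linear_combination P*e1
    have h2 : B^2*P*Q ≤ S^2*Vn*Q := by nlinarith [m2, hV.le]
    exact le_of_mul_le_mul_right (by linarith) hQ
  have e2 : A^2*P + B^2*P = S^2*Vn + T^2*Vn := by linear_combination P*f2 - Vn*f1
  have hT : T^2*Vn ≤ A^2*P := by linarith
  have h9 : T^2*Vn*(B^2*P) ≤ A^2*P*(S^2*Vn) :=
    mul_le_mul hT hB (by positivity) (by positivity)
  have h11 : (T*B)^2 ≤ (S*A)^2 := by
    have h10 : (T*B)^2*(Vn*P) ≤ (S*A)^2*(Vn*P) := by nlinarith [h9]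
    exact le_of_mul_le_mul_right h10 (by positivity)
  nlinarith [h11, mul_nonneg f6 f4, sq_nonneg (S*A+T*B), sq_nonneg (S*A-T*B)]

set_option maxHeartbeats 1000000 in
theorem stmt_10' (x₀ : EuclideanSpace ℝ (Fin 2))
    (φ : EuclideanSpace ℝ (Fin 2) → ℝ)
    (hgrad_dir : ∀ y, (inner ℝ (gradient φ x₀) (y - x₀) : ℝ) < 0 → φ y ≤ φ x₀)
    (hgrad : gradient φ x₀ ≠ 0)
    (N : Finset (EuclideanSpace ℝ (Fin 2))) (hNne : N.Nonempty) (hx₀N : x₀ ∉ N)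
    (hsym1 : ∀ y ∈ N, ∃ y' ∈ N, y' - x₀ = -(y - x₀))
    (hsym2 : ∀ y ∈ N, ∃ y' ∈ N, (inner ℝ (y - x₀) (y' - x₀) : ℝ) = 0) :
    ∃ p : EuclideanSpace ℝ (Fin 2), (∃ y ∈ N, -p = y - x₀) ∧
      ∀ y ∈ N, (inner ℝ p (y - x₀) : ℝ) < 0 → φ y ≤ φ x₀ := by
  set g := gradient φ x₀ with hgdef
  have hinner : ∀ w z : EuclideanSpace ℝ (Fin 2),
      (inner ℝ w z : ℝ) = w 0 * z 0 + w 1 * z 1 := fun w z => by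
    simp [PiLp.inner_apply, Fin.sum_univ_two, RCLike.inner_apply]; ring
  have hnorm : ∀ w : EuclideanSpace ℝ (Fin 2), ‖w‖^2 = w 0^2 + w 1^2 := fun w => by
    rw [← real_inner_self_eq_norm_sq, hinner]; ring
  have hne : ∀ y ∈ N, (0:ℝ) < ‖y - x₀‖ := fun y hy => by
    rw [norm_pos_iff, sub_ne_zero]
    rintro rfl; exact hx₀N hy
  obtain ⟨yp, hypN, hmax⟩ :=
    N.exists_max_image (fun y => (inner ℝ g (y - x₀) : ℝ) / ‖y - x₀‖) hNne
  set p := yp - x₀ with hpdef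
  have hnp : (0:ℝ) < ‖p‖ := hne yp hypN
  refine ⟨p, ?_, ?_⟩
  · obtain ⟨y', hy', he⟩ := hsym1 yp hypN
    exact ⟨y', hy', he.symm⟩
  · intro y hyN hpv
    by_contra hcon
    push_neg at hcon
    have hA : 0 ≤ (inner ℝ g (y - x₀) : ℝ) := by
      by_contra hA'; push_neg at hA'
      exact absurd (hgrad_dir y hA') (not_le.2 hcon)
    set v := y - x₀ with hvdef
    have hnv : (0:ℝ) < ‖v‖ := hne y hyN
    obtain ⟨y', hy'N, horth⟩ := hsym2 y hyN
    set q := y' - x₀ with hqdef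
    have hnq : (0:ℝ) < ‖q‖ := hne y' hy'N
    have hng : (0:ℝ) < ‖g‖ := norm_pos_iff.2 hgrad
    -- maximality facts
    have hmaxv : (inner ℝ g v : ℝ) / ‖v‖ ≤ (inner ℝ g p : ℝ) / ‖p‖ := hmax y hyN
    have hmaxq : (inner ℝ g q : ℝ) / ‖q‖ ≤ (inner ℝ g p : ℝ) / ‖p‖ := hmax y' hy'N
    have hmaxnq : -(inner ℝ g q : ℝ) / ‖q‖ ≤ (inner ℝ g p : ℝ) / ‖p‖ := by
      obtain ⟨y'', hy''N, he⟩ := hsym1 y' hy'N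
      have := hmax y'' hy''N
      rwa [he, inner_neg_right, norm_neg] at this
    have hS : (0:ℝ) ≤ inner ℝ g p := by
      obtain ⟨y'', hy''N, he⟩ := hsym1 yp hypN
      have h2 := hmax y'' hy''N
      rw [he, inner_neg_right, norm_neg] at h2
      have := div_le_div_iff₀ hnp hnp |>.mp h2
      nlinarith
    -- unnormalized scalars
    set S : ℝ := inner ℝ g p with hSdef
    set A : ℝ := inner ℝ g v with hAdef
    set C : ℝ := inner ℝ g q with hCdef
    have m1' : A * ‖p‖ ≤ S * ‖v‖ := by
      have := (div_le_div_iff₀ hnv hnp).mp hmaxv; linarith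
    have m2a : C * ‖p‖ ≤ S * ‖q‖ := by
      have := (div_le_div_iff₀ hnq hnp).mp hmaxq; linarith
    have m2b : -C * ‖p‖ ≤ S * ‖q‖ := by
      have := (div_le_div_iff₀ hnq hnp).mp hmaxnq; linarith
    have m1 : A^2 * ‖p‖^2 ≤ S^2 * ‖v‖^2 := by nlinarith [mul_nonneg hA hnp.le, mul_nonneg hS hnv.le]
    have m2 : C^2 * ‖p‖^2 ≤ S^2 * ‖q‖^2 := by nlinarith [mul_nonneg hS hnq.le]
    -- coordinate identities
    set T : ℝ := -(g 1) * p 0 + g 0 * p 1 with hTdef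
    set B : ℝ := -(g 1) * v 0 + g 0 * v 1 with hBdef
    have f1 : S^2 + T^2 = ‖g‖^2 * ‖p‖^2 := by
      rw [hSdef, hTdef]; simp only [hinner, hnorm]; ring
    have f2 : A^2 + B^2 = ‖g‖^2 * ‖v‖^2 := by
      rw [hAdef, hBdef]; simp only [hinner, hnorm]; ring
    have horth' : v 0 * q 0 + v 1 * q 1 = 0 := by rw [← hinner]; exact horth
    have f8 : A^2 * ‖q‖^2 + C^2 * ‖v‖^2 = ‖g‖^2 * ‖v‖^2 * ‖q‖^2 := by
      rw [hAdef, hCdef]; simp only [hinner, hnorm]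
      linear_combination ((g 1)^2*(v 1)*(q 1) - (g 1)^2*(v 0)*(q 0) + 2*(g 0)*(g 1)*(v 1)*(q 0)
        + 2*(g 0)*(g 1)*(v 0)*(q 1) - (g 0)^2*(v 1)*(q 1) + (g 0)^2*(v 0)*(q 0)) * horth'
    have f3 : S * A + T * B < 0 := by
      have hid : (inner ℝ p v : ℝ) * ‖g‖^2 = S * A + T * B := by
        rw [hSdef, hAdef, hTdef, hBdef]; simp only [hinner, hnorm]; ring
      nlinarith [mul_neg_of_neg_of_pos hpv (pow_pos hng 2)]
    exact aux_key S T A B C (‖g‖^2) (‖p‖^2) (‖v‖^2) (‖q‖^2)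
      (pow_pos hng 2) (pow_pos hnp 2) (pow_pos hnv 2) (pow_pos hnq 2)
      f1 f2 f8 hA hS m1 m2 f3

/-- Existence on symmetric stencils in `ℝ²`. If `φ` is a smooth
quasiconcave function on `ℝ²` with `∇φ(x₀) ≠ 0`, and the stencil `V = {y − x₀ : y ∈ N}`
is symmetric (closed under negation and every vector has an orthogonal companion),
then the discrete subdifferential `P(φ, φ(x₀), x₀)` is nonempty. -/
theorem stmt_10 (x₀ : EuclideanSpace ℝ (Fin 2))
    (φ : EuclideanSpace ℝ (Fin 2) → ℝ) (hφ : ContDiff ℝ (⊤ : ℕ∞) φ)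
    (hqc : ∀ x y : EuclideanSpace ℝ (Fin 2), ∀ l : ℝ, 0 < l → l < 1 →
      min (φ x) (φ y) ≤ φ (l • x + (1 - l) • y))
    (hgrad : gradient φ x₀ ≠ 0)
    (N : Finset (EuclideanSpace ℝ (Fin 2))) (hNne : N.Nonempty) (hx₀N : x₀ ∉ N)
    (hsym1 : ∀ y ∈ N, ∃ y' ∈ N, y' - x₀ = -(y - x₀))
    (hsym2 : ∀ y ∈ N, ∃ y' ∈ N, (inner ℝ (y - x₀) (y' - x₀) : ℝ) = 0) :
    ∃ p : EuclideanSpace ℝ (Fin 2), (∃ y ∈ N, -p = y - x₀) ∧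
      ∀ y ∈ N, (inner ℝ p (y - x₀) : ℝ) < 0 → φ y ≤ φ x₀ :=
  stmt_10' x₀ φ (fun y h => aux_grad φ hφ hqc x₀ y h) hgrad N hNne hx₀N hsym1 hsym2
end

section
/- Let d ≥ 2, x₀ ∈ ℝ^d, 0 < h ≤ h₀, and let φ : ℝ^d → ℝ be smooth with ∇φ(x₀) ≠ 0; write n₀ := ∇φ(x₀)/|∇φ(x₀)|. Define A₂ := sup{ −r · ∇²φ(x) r : x ∈ B(x₀,h₀), |r| = 1, r · ∇φ(x₀) = 0 }, C₁ := sup{ |n₀ · ∇²φ(x) n₀| : x ∈ B(x₀,h₀) }, and C₂ := sup{ |n₀ · ∇²φ(x) r| : x ∈ B(x₀,h₀), |r| = 1, r · ∇φ(x₀) = 0 }, where B(x₀,h₀) is the closed ball. Let N ⊆ (B(x₀,h) \ {x₀}) be a nonempty finite set, set V := {y − x₀ : y ∈ N}, and let dθ ∈ [0,π] be a directional resolution for V. Assume A₂ ≥ 0, 2|∇φ(x₀)| − h(C₁ + 2C₂) > 0, the ratio ρ := A₂ h / (2|∇φ(x₀)| − h(C₁ + 2C₂)) satisfies ρ ≤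 1, and arcsin(ρ) + 2·dθ < π/2. Then every p in the discrete subdifferential P(φ, φ(x₀), x₀) (i.e., every p with −p ∈ V such that for all y ∈ N, p·(y−x₀) < 0 implies φ(y) ≤ φ(x₀)) satisfies w(p, ∇φ(x₀)) ≤ arcsin(ρ) + 2·dθ. -/
open InnerProductGeometry Set

local notation "⟪" x ", " y "⟫" => @inner ℝ _ _ x y

section Aux

variable {E : Type*} [NormedAddCommGroup E] [InnerProductSpace ℝ E]

lemma my_arccos_le_arccos {a b : ℝ} (hab : a ≤ b) : Real.arccos b ≤ Real.arccos a := by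
  rw [Real.arccos_eq_pi_div_two_sub_arcsin, Real.arccos_eq_pi_div_two_sub_arcsin]
  have := Real.monotone_arcsin hab
  linarith

/-- Spherical triangle inequality for unit vectors. -/
lemma angle_triangle_unit {u v w : E} (hu : ‖u‖ = 1) (hv : ‖v‖ = 1) (hw : ‖w‖ = 1) :
    angle u w ≤ angle u v + angle v w := by
  rcases le_or_gt Real.pi (angle u v + angle v w) with hS | hS
  · exact (angle_le_pi u w).trans hS
  set t : ℝ := ⟪u, v⟫ with ht
  set s : ℝ := ⟪v, w⟫ with hs
  have huv : angle u v = Real.arccos t := by rw [angle, hu, hv]; norm_num [ht]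
  have hvw : angle v w = Real.arccos s := by rw [angle, hv, hw]; norm_num [hs]
  have huw : angle u w = Real.arccos ⟪u, w⟫ := by rw [angle, hu, hw]; norm_num
  have ht1 : |t| ≤ 1 := by
    have := abs_real_inner_le_norm u v; rwa [hu, hv, mul_one] at this
  have hs1 : |s| ≤ 1 := by
    have := abs_real_inner_le_norm v w; rwa [hv, hw, mul_one] at this
  rw [abs_le] at ht1 hs1
  -- key inequality
  set u' : E := u - t • v with hu'
  set w' : E := w - s • v with hw'
  have hvv : ⟪v, v⟫ = (1 : ℝ) := by
    rw [real_inner_self_eq_norm_sq, hv]; norm_num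
  have huu : ⟪u, u⟫ = (1 : ℝ) := by
    rw [real_inner_self_eq_norm_sq, hu]; norm_num
  have hww : ⟪w, w⟫ = (1 : ℝ) := by
    rw [real_inner_self_eq_norm_sq, hw]; norm_num
  have hvu : ⟪v, u⟫ = t := by rw [real_inner_comm]
  have hwv : ⟪w, v⟫ = s := by rw [real_inner_comm]
  have hnu' : ‖u'‖ ^ 2 = 1 - t ^ 2 := by
    rw [hu', ← real_inner_self_eq_norm_sq]
    simp only [inner_sub_left, inner_sub_right, real_inner_smul_left, real_inner_smul_right]
    rw [huu, hvv, hvu, ← ht]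
    ring
  have hnw' : ‖w'‖ ^ 2 = 1 - s ^ 2 := by
    rw [hw', ← real_inner_self_eq_norm_sq]
    simp only [inner_sub_left, inner_sub_right, real_inner_smul_left, real_inner_smul_right]
    rw [hww, hvv, hwv, ← hs]
    ring
  have hinner : ⟪u', w'⟫ = ⟪u, w⟫ - t * s := by
    rw [hu', hw']
    simp only [inner_sub_left, inner_sub_right, real_inner_smul_left, real_inner_smul_right]
    rw [hvv, ← ht, ← hs]
    ring
  have hsq1 : Real.sqrt (1 - t ^ 2) = ‖u'‖ := by
    rw [← hnu', Real.sqrt_sq (norm_nonneg _)]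
  have hsq2 : Real.sqrt (1 - s ^ 2) = ‖w'‖ := by
    rw [← hnw', Real.sqrt_sq (norm_nonneg _)]
  have hcs : -(‖u'‖ * ‖w'‖) ≤ ⟪u', w'⟫ := neg_le_of_abs_le (abs_real_inner_le_norm u' w')
  have hcos : Real.cos (angle u v + angle v w) ≤ ⟪u, w⟫ := by
    rw [Real.cos_add, huv, hvw, Real.cos_arccos ht1.1 ht1.2, Real.cos_arccos hs1.1 hs1.2,
      Real.sin_arccos, Real.sin_arccos, hsq1, hsq2]
    have : ⟪u, w⟫ = t * s + ⟪u', w'⟫ := by rw [hinner]; ring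
    rw [this]
    nlinarith [hcs]
  have hS0 : 0 ≤ angle u v + angle v w := by
    have := angle_nonneg u v; have := angle_nonneg v w; linarith
  calc angle u w = Real.arccos ⟪u, w⟫ := huw
    _ ≤ Real.arccos (Real.cos (angle u v + angle v w)) := my_arccos_le_arccos hcos
    _ = angle u v + angle v w := Real.arccos_cos hS0 hS.le

lemma angle_triangle' {u v w : E} (hu : ‖u‖ ≠ 0) (hv : ‖v‖ ≠ 0) (hw : ‖w‖ ≠ 0) :
    angle u w ≤ angle u v + angle v w := by
  have hu' : (0:ℝ) < ‖u‖⁻¹ := by positivity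
  have hv' : (0:ℝ) < ‖v‖⁻¹ := by positivity
  have hw' : (0:ℝ) < ‖w‖⁻¹ := by positivity
  have h1 : ∀ z : E, ‖z‖ ≠ 0 → ‖(‖z‖⁻¹ • z)‖ = 1 := by
    intro z hz
    rw [norm_smul, norm_inv, norm_norm, inv_mul_cancel₀ hz]
  have key := angle_triangle_unit (h1 u hu) (h1 v hv) (h1 w hw)
  rwa [angle_smul_left_of_pos _ _ hu', angle_smul_left_of_pos _ _ hu',
    angle_smul_right_of_pos _ _ hw', angle_smul_right_of_pos _ _ hv',
    angle_smul_left_of_pos _ _ hv', angle_smul_right_of_pos _ _ hw'] at key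

/-- Second-order Taylor expansion with Lagrange remainder along a segment. -/
lemma taylor_two_aux (φ : E → ℝ) (hφ : ContDiff ℝ (⊤ : ℕ∞) φ) (x q : E) :
    ∃ t ∈ Set.Ioo (0:ℝ) 1,
      φ (x + q) = φ x + fderiv ℝ φ x q + iteratedFDeriv ℝ 2 φ (x + t • q) ![q, q] / 2 := by
  set f : ℝ → ℝ := fun t => φ (x + t • q) with hf_def
  have hL : ∀ t : ℝ, HasDerivAt (fun t : ℝ => x + t • q) q t := by
    intro t
    have := ((hasDerivAt_id t).smul_const q).const_add x
    simpa using this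
  have hdφ : Differentiable ℝ φ := hφ.differentiable (by simp)
  have hdf : ∀ t : ℝ, HasDerivAt f (fderiv ℝ φ (x + t • q) q) t := by
    intro t
    exact (hdφ (x + t • q)).hasFDerivAt.comp_hasDerivAt t (hL t)
  have hderiv : deriv f = fun t => fderiv ℝ φ (x + t • q) q := funext fun t => (hdf t).deriv
  have hφ2 : ContDiff ℝ 2 φ := hφ.of_le (WithTop.coe_le_coe.mpr le_top)
  have hφ' : ContDiff ℝ 1 (fderiv ℝ φ) := hφ2.fderiv_right (m := 1) le_rfl
  have hd2 : ∀ t : ℝ, HasDerivAt (deriv f)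
      (fderiv ℝ (fderiv ℝ φ) (x + t • q) q q) t := by
    intro t
    rw [hderiv]
    have h1 : HasFDerivAt (fderiv ℝ φ) (fderiv ℝ (fderiv ℝ φ) (x + t • q)) (x + t • q) :=
      ((hφ'.differentiable (by simp)) (x + t • q)).hasFDerivAt
    have h2 : HasDerivAt (fun t : ℝ => fderiv ℝ φ (x + t • q))
        (fderiv ℝ (fderiv ℝ φ) (x + t • q) q) t := h1.comp_hasDerivAt t (hL t)
    have h3 := h2.clm_apply (hasDerivAt_const t q)
    simpa using h3
  have hfC : ContDiff ℝ (⊤ : ℕ∞) f := by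
    apply hφ.comp
    exact contDiff_const.add (contDiff_id.smul contDiff_const)
  have hIcc : UniqueDiffOn ℝ (Icc (0:ℝ) 1) := uniqueDiffOn_Icc one_pos
  have hmem : (0:ℝ) ∈ Icc (0:ℝ) 1 := by norm_num
  have hcd : ContDiffOn ℝ 1 f (Icc 0 1) := (hfC.of_le (by simp)).contDiffOn
  have heq1 : ∀ z ∈ Ioo (0:ℝ) 1,
      iteratedDerivWithin 1 f (Icc 0 1) =ᶠ[nhds z] deriv f := by
    intro z hz
    filter_upwards [Ioo_mem_nhds hz.1 hz.2] with s hs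
    rw [iteratedDerivWithin_one]
    exact derivWithin_of_mem_nhds (Icc_mem_nhds hs.1 hs.2)
  have hdiff : DifferentiableOn ℝ (iteratedDerivWithin 1 f (Icc 0 1)) (Ioo 0 1) := by
    intro z hz
    exact (((heq1 z hz).differentiableAt_iff).mpr (hd2 z).differentiableAt).differentiableWithinAt
  obtain ⟨ξ, hξ, hT⟩ := taylor_mean_remainder_lagrange (n := 1) (x₀ := 0) (x := 1) zero_ne_one
    (by rw [uIcc_of_le zero_le_one]; exact_mod_cast hcd)
    (by rw [uIcc_of_le zero_le_one, uIoo_of_le zero_le_one]; exact hdiff)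
  rw [uIcc_of_le zero_le_one] at hT
  rw [uIoo_of_le zero_le_one] at hξ
  refine ⟨ξ, hξ, ?_⟩
  have hit2 : iteratedDerivWithin 2 f (Icc 0 1) ξ
      = fderiv ℝ (fderiv ℝ φ) (x + ξ • q) q q := by
    have h1 : iteratedDerivWithin 2 f (Icc 0 1) ξ
        = derivWithin (iteratedDerivWithin 1 f (Icc 0 1)) (Icc 0 1) ξ :=
      congrFun iteratedDerivWithin_succ ξ
    rw [h1, derivWithin_of_mem_nhds (Icc_mem_nhds hξ.1 hξ.2), (heq1 ξ hξ).deriv_eq,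
      (hd2 ξ).deriv]
  have htay : taylorWithinEval f 1 (Icc 0 1) 0 1 = f 0 + deriv f 0 := by
    rw [taylor_within_apply]
    have hd0 : derivWithin f (Icc 0 1) 0 = deriv f 0 :=
      (hdf 0).differentiableAt.derivWithin (hIcc 0 hmem)
    simp [Finset.sum_range_succ, iteratedDerivWithin_zero,
      iteratedDerivWithin_one, hd0]
  rw [htay] at hT
  have hf1 : f 1 = φ (x + q) := by simp [hf_def]
  have hf0 : f 0 = φ x := by simp [hf_def]
  have hdf0 : deriv f 0 = fderiv ℝ φ x q := by
    rw [hderiv]; simp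
  have hH : iteratedFDeriv ℝ 2 φ (x + ξ • q) ![q, q]
      = fderiv ℝ (fderiv ℝ φ) (x + ξ • q) q q := by
    rw [iteratedFDeriv_two_apply]
    simp
  rw [hf1, hf0, hdf0, hit2] at hT
  rw [hH]
  norm_num [Nat.factorial] at hT
  linarith

end Aux

set_option maxHeartbeats 1000000 in
/-- Theorem 3.7 of the paper: the direction of any subdifferential
vector is close to the gradient direction. Every `p` in the discrete subdifferential
`P(φ, φ(x₀), x₀)` satisfies `w(p, ∇φ(x₀)) ≤ arcsin ρ + 2 dθ` where
`ρ = A₂ h / (2|∇φ(x₀)| − h(C₁ + 2C₂))`. -/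
theorem stmt_11 {d : ℕ} (hd : 2 ≤ d) (x₀ : EuclideanSpace ℝ (Fin d)) (h h₀ : ℝ)
    (hh : 0 < h) (hhh₀ : h ≤ h₀)
    (φ : EuclideanSpace ℝ (Fin d) → ℝ) (hφ : ContDiff ℝ (⊤ : ℕ∞) φ)
    (hgrad : gradient φ x₀ ≠ 0)
    (n₀ : EuclideanSpace ℝ (Fin d)) (hn₀ : n₀ = ‖gradient φ x₀‖⁻¹ • gradient φ x₀)
    (A₂ C₁ C₂ : ℝ)
    (hA₂ : A₂ = sSup {a : ℝ | ∃ x ∈ Metric.closedBall x₀ h₀,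
      ∃ r : EuclideanSpace ℝ (Fin d), ‖r‖ = 1 ∧ (inner ℝ r (gradient φ x₀) : ℝ) = 0 ∧
        a = -(iteratedFDeriv ℝ 2 φ x ![r, r])})
    (hC₁ : C₁ = sSup {a : ℝ | ∃ x ∈ Metric.closedBall x₀ h₀,
      a = |iteratedFDeriv ℝ 2 φ x ![n₀, n₀]|})
    (hC₂ : C₂ = sSup {a : ℝ | ∃ x ∈ Metric.closedBall x₀ h₀,
      ∃ r : EuclideanSpace ℝ (Fin d), ‖r‖ = 1 ∧ (inner ℝ r (gradient φ x₀) : ℝ) = 0 ∧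
        a = |iteratedFDeriv ℝ 2 φ x ![n₀, r]|})
    (N : Finset (EuclideanSpace ℝ (Fin d))) (hNne : N.Nonempty)
    (hNb : ∀ y ∈ N, y ∈ Metric.closedBall x₀ h ∧ y ≠ x₀)
    (dθ : ℝ) (hdθ0 : 0 ≤ dθ) (hdθπ : dθ ≤ Real.pi)
    (hres : ∀ n : EuclideanSpace ℝ (Fin d), ‖n‖ = 1 →
      ∃ q ∈ N, ‖q - x₀‖ * Real.cos dθ ≤ (inner ℝ n (q - x₀) : ℝ))
    (hA₂0 : 0 ≤ A₂)
    (hden : 0 < 2 * ‖gradient φ x₀‖ - h * (C₁ + 2 * C₂))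
    (ρ : ℝ) (hρ : ρ = A₂ * h / (2 * ‖gradient φ x₀‖ - h * (C₁ + 2 * C₂)))
    (hρ1 : ρ ≤ 1)
    (hang : Real.arcsin ρ + 2 * dθ < Real.pi / 2)
    (p : EuclideanSpace ℝ (Fin d))
    (hpV : ∃ y ∈ N, -p = y - x₀)
    (hpP : ∀ y ∈ N, (inner ℝ p (y - x₀) : ℝ) < 0 → φ y ≤ φ x₀) :
    Real.arccos ((inner ℝ p (gradient φ x₀) : ℝ) / (‖p‖ * ‖gradient φ x₀‖))
      ≤ Real.arcsin ρ + 2 * dθ := by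
  classical
  set g := gradient φ x₀ with hg
  have hG0 : 0 < ‖g‖ := norm_pos_iff.mpr hgrad
  set G := ‖g‖ with hG
  have hgGn : g = G • n₀ := by
    rw [hn₀, smul_smul, mul_inv_cancel₀ (ne_of_gt hG0), one_smul]
  have hn₀1 : ‖n₀‖ = 1 := by
    rw [hn₀, norm_smul, norm_inv, norm_norm, inv_mul_cancel₀ (ne_of_gt hG0)]
  have hn₀0 : ‖n₀‖ ≠ 0 := by rw [hn₀1]; norm_num
  -- a unit vector orthogonal to g
  obtain ⟨r₀, hr₀1, hr₀g⟩ : ∃ r : EuclideanSpace ℝ (Fin d), ‖r‖ = 1 ∧ ⟪r, g⟫ = 0 := by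
    have hbot : (ℝ ∙ g)ᗮ ≠ ⊥ := by
      intro hbot
      have h1 := Submodule.finrank_add_finrank_orthogonal (K := (ℝ ∙ g))
      rw [hbot, finrank_bot, finrank_span_singleton hgrad, finrank_euclideanSpace_fin] at h1
      omega
    obtain ⟨v, hv, hv0⟩ := Submodule.exists_mem_ne_zero_of_ne_bot hbot
    refine ⟨‖v‖⁻¹ • v, ?_, ?_⟩
    · rw [norm_smul, norm_inv, norm_norm, inv_mul_cancel₀ (norm_ne_zero_iff.mpr hv0)]
    · rw [real_inner_smul_left, real_inner_comm,
        (Submodule.mem_orthogonal _ v).mp hv g (Submodule.mem_span_singleton_self g), mul_zero]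
  have hr₀n₀ : ⟪r₀, n₀⟫ = 0 := by
    rw [hn₀, real_inner_smul_right, hr₀g, mul_zero]
  -- boundedness of the second derivative on the ball
  have hx₀mem : x₀ ∈ Metric.closedBall x₀ h₀ := Metric.mem_closedBall_self (by linarith)
  obtain ⟨M, hM⟩ := (isCompact_closedBall x₀ h₀).exists_bound_of_continuousOn
      (hφ.continuous_iteratedFDeriv (m := 2) (WithTop.coe_le_coe.mpr le_top)).continuousOn
  have hHle : ∀ x ∈ Metric.closedBall x₀ h₀, ∀ v w : EuclideanSpace ℝ (Fin d),
      ‖v‖ = 1 → ‖w‖ = 1 → |iteratedFDeriv ℝ 2 φ x ![v, w]| ≤ M := by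
    intro x hx v w hv hw
    have h1 := (iteratedFDeriv ℝ 2 φ x).le_opNorm ![v, w]
    rw [Fin.prod_univ_two] at h1
    simp only [Matrix.cons_val_zero, Matrix.cons_val_one, Matrix.head_cons, hv, hw,
      mul_one] at h1
    rw [← Real.norm_eq_abs]
    exact h1.trans (by simpa using hM x hx)
  have hbddC₁ : BddAbove {a : ℝ | ∃ x ∈ Metric.closedBall x₀ h₀,
      a = |iteratedFDeriv ℝ 2 φ x ![n₀, n₀]|} := by
    refine ⟨M, ?_⟩
    rintro a ⟨x, hx, rfl⟩
    exact hHle x hx n₀ n₀ hn₀1 hn₀1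
  have hbddC₂ : BddAbove {a : ℝ | ∃ x ∈ Metric.closedBall x₀ h₀,
      ∃ r : EuclideanSpace ℝ (Fin d), ‖r‖ = 1 ∧ ⟪r, g⟫ = 0 ∧
        a = |iteratedFDeriv ℝ 2 φ x ![n₀, r]|} := by
    refine ⟨M, ?_⟩
    rintro a ⟨x, hx, r, hr1, -, rfl⟩
    exact hHle x hx n₀ r hn₀1 hr1
  have hbddA₂ : BddAbove {a : ℝ | ∃ x ∈ Metric.closedBall x₀ h₀,
      ∃ r : EuclideanSpace ℝ (Fin d), ‖r‖ = 1 ∧ ⟪r, g⟫ = 0 ∧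
        a = -(iteratedFDeriv ℝ 2 φ x ![r, r])} := by
    refine ⟨M, ?_⟩
    rintro a ⟨x, hx, r, hr1, -, rfl⟩
    have := hHle x hx r r hr1 hr1
    have := neg_abs_le (iteratedFDeriv ℝ 2 φ x ![r, r])
    linarith [abs_nonneg (iteratedFDeriv ℝ 2 φ x ![r, r])]
  have hC₁ub : ∀ x ∈ Metric.closedBall x₀ h₀,
      |iteratedFDeriv ℝ 2 φ x ![n₀, n₀]| ≤ C₁ := by
    intro x hx
    rw [hC₁]
    exact le_csSup hbddC₁ ⟨x, hx, rfl⟩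
  have hC₂ub : ∀ x ∈ Metric.closedBall x₀ h₀, ∀ r : EuclideanSpace ℝ (Fin d),
      ‖r‖ = 1 → ⟪r, g⟫ = 0 → |iteratedFDeriv ℝ 2 φ x ![n₀, r]| ≤ C₂ := by
    intro x hx r hr1 hrg
    rw [hC₂]
    exact le_csSup hbddC₂ ⟨x, hx, r, hr1, hrg, rfl⟩
  have hA₂ub : ∀ x ∈ Metric.closedBall x₀ h₀, ∀ r : EuclideanSpace ℝ (Fin d),
      ‖r‖ = 1 → ⟪r, g⟫ = 0 → -(iteratedFDeriv ℝ 2 φ x ![r, r]) ≤ A₂ := by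
    intro x hx r hr1 hrg
    rw [hA₂]
    exact le_csSup hbddA₂ ⟨x, hx, r, hr1, hrg, rfl⟩
  have hC₁0 : 0 ≤ C₁ := (abs_nonneg _).trans (hC₁ub x₀ hx₀mem)
  have hC₂0 : 0 ≤ C₂ := (abs_nonneg _).trans (hC₂ub x₀ hx₀mem r₀ hr₀1 hr₀g)
  -- ρ and arcsin facts
  have hρ0 : 0 ≤ ρ := by
    rw [hρ]
    exact div_nonneg (mul_nonneg hA₂0 hh.le) hden.le
  set s₀ := Real.arcsin ρ with hs₀def
  have hs₀0 : 0 ≤ s₀ := Real.arcsin_nonneg.mpr hρ0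
  have hsins₀ : Real.sin s₀ = ρ := Real.sin_arcsin (by linarith) hρ1
  -- p is nonzero
  obtain ⟨y₁, hy₁N, hy₁⟩ := hpV
  have hp0 : p ≠ 0 := by
    intro hp
    rw [hp, neg_zero] at hy₁
    exact (hNb y₁ hy₁N).2 (by rw [← sub_eq_zero, ← hy₁])
  have hpn : 0 < ‖p‖ := norm_pos_iff.mpr hp0
  -- reduce to the angle
  have hgoal : Real.arccos ((inner ℝ p g : ℝ) / (‖p‖ * ‖g‖)) = InnerProductGeometry.angle p g :=
    rfl
  rw [hgoal]
  by_contra hcon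
  push_neg at hcon
  have hpg : InnerProductGeometry.angle p g = InnerProductGeometry.angle p n₀ := by
    rw [hgGn]
    exact angle_smul_right_of_pos _ _ hG0
  set θ := InnerProductGeometry.angle p n₀ with hθdef
  rw [hpg] at hcon
  have hθ0 : 0 ≤ θ := angle_nonneg p n₀
  have hθπ : θ ≤ Real.pi := angle_le_pi p n₀
  -- decomposition of p
  set c := (⟪p, n₀⟫ : ℝ) with hcdef
  have hcosθ : Real.cos θ = c / ‖p‖ := by
    rw [hθdef, cos_angle, hn₀1, mul_one]
  set pp := p - c • n₀ with hppdef
  have hn₀n₀ : ⟪n₀, n₀⟫ = (1 : ℝ) := by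
    rw [real_inner_self_eq_norm_sq, hn₀1]; norm_num
  have hppn₀ : ⟪pp, n₀⟫ = 0 := by
    rw [hppdef, inner_sub_left, real_inner_smul_left, hn₀n₀, mul_one, sub_self]
  have hppsq : ‖pp‖ ^ 2 = ‖p‖ ^ 2 - c ^ 2 := by
    rw [hppdef, ← real_inner_self_eq_norm_sq]
    simp only [inner_sub_left, inner_sub_right, real_inner_smul_left, real_inner_smul_right]
    rw [hn₀n₀, real_inner_self_eq_norm_sq, real_inner_comm p n₀, ← hcdef]
    ring
  have hsinθ : Real.sin θ = ‖pp‖ / ‖p‖ := by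
    rw [Real.sin_eq_sqrt_one_sub_cos_sq hθ0 hθπ, hcosθ]
    have h1 : 1 - (c / ‖p‖) ^ 2 = (‖pp‖ / ‖p‖) ^ 2 := by
      rw [div_pow, div_pow, hppsq]
      field_simp
    rw [h1, Real.sqrt_sq (by positivity)]
  -- the auxiliary unit vector u
  set u := if pp = 0 then r₀ else ‖pp‖⁻¹ • pp with hudef
  have hu1 : ‖u‖ = 1 := by
    rw [hudef]
    split_ifs with h'
    · exact hr₀1
    · rw [norm_smul, norm_inv, norm_norm, inv_mul_cancel₀ (norm_ne_zero_iff.mpr h')]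
  have hun₀ : ⟪u, n₀⟫ = 0 := by
    rw [hudef]
    split_ifs with h'
    · exact hr₀n₀
    · rw [real_inner_smul_left, hppn₀, mul_zero]
  have hup : ⟪u, p⟫ = ‖pp‖ := by
    have hpdec : p = pp + c • n₀ := by rw [hppdef]; abel
    rw [hudef]
    split_ifs with h'
    · rw [hpdec, h', zero_add, real_inner_smul_right, norm_zero, hr₀n₀, mul_zero]
    · rw [hpdec, inner_add_right, real_inner_smul_left, real_inner_smul_right,
        real_inner_self_eq_norm_sq]
      rw [real_inner_smul_left, hppn₀, mul_zero, mul_zero, add_zero, sq]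
      field_simp
  -- the rotation angle β
  set β := max 0 ((Real.pi - θ - s₀) / 2) with hβdef
  have hβ0 : 0 ≤ β := le_max_left _ _
  have hβsum : β + dθ < Real.pi / 2 - s₀ := by
    rcases le_or_gt ((Real.pi - θ - s₀) / 2) 0 with h' | h'
    · rw [hβdef, max_eq_left h']
      linarith
    · rw [hβdef, max_eq_right h'.le]
      linarith
  have hθβl : Real.pi / 2 + dθ < θ + β := by
    rcases le_or_gt ((Real.pi - θ - s₀) / 2) 0 with h' | h'
    · rw [hβdef, max_eq_left h']
      linarith
    · rw [hβdef, max_eq_right h'.le]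
      linarith
  have hθβu : θ + β ≤ Real.pi := by
    rcases le_or_gt ((Real.pi - θ - s₀) / 2) 0 with h' | h'
    · rw [hβdef, max_eq_left h']
      linarith
    · rw [hβdef, max_eq_right h'.le]
      linarith
  have hβπ : β ≤ Real.pi := by
    have := Real.pi_pos
    linarith
  -- the probe direction n
  set n : EuclideanSpace ℝ (Fin d) := Real.cos β • n₀ - Real.sin β • u with hndef
  have hn₀u : ⟪n₀, u⟫ = 0 := by rw [real_inner_comm]; exact hun₀
  have hninner : ⟪n, n⟫ = (1 : ℝ) := by
    rw [hndef]
    simp only [inner_sub_left, inner_sub_right, real_inner_smul_left, real_inner_smul_right]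
    rw [hn₀n₀, hn₀u, hun₀, real_inner_self_eq_norm_sq, hu1]
    linear_combination Real.sin_sq_add_cos_sq β
  have hn1 : ‖n‖ = 1 := by
    have h1 : ‖n‖ ^ 2 = 1 := by rw [← real_inner_self_eq_norm_sq, hninner]
    rw [← Real.sqrt_sq (norm_nonneg n), h1, Real.sqrt_one]
  have hnn₀ : ⟪n, n₀⟫ = Real.cos β := by
    rw [hndef, inner_sub_left, real_inner_smul_left, real_inner_smul_left, hn₀n₀, hun₀]
    ring
  have hnp : ⟪n, p⟫ = ‖p‖ * Real.cos (θ + β) := by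
    have hc' : c = ‖p‖ * Real.cos θ := by
      rw [hcosθ]; field_simp
    have hpp' : ‖pp‖ = ‖p‖ * Real.sin θ := by
      rw [hsinθ]; field_simp
    rw [hndef, inner_sub_left, real_inner_smul_left, real_inner_smul_left]
    rw [real_inner_comm p n₀, ← hcdef, hup, hc', hpp', Real.cos_add]
    ring
  -- apply the directional resolution
  obtain ⟨y, hyN, hyq⟩ := hres n hn1
  set q := y - x₀ with hqdef
  have hq0 : q ≠ 0 := sub_ne_zero.mpr (hNb y hyN).2
  have hqpos : 0 < ‖q‖ := norm_pos_iff.mpr hq0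
  have hqh : ‖q‖ ≤ h := by
    have := (hNb y hyN).1
    rw [Metric.mem_closedBall, dist_eq_norm] at this
    exact this
  -- angle between n and q is at most dθ
  have hangnq : InnerProductGeometry.angle n q ≤ dθ := by
    have h1 : Real.cos dθ ≤ ⟪n, q⟫ / (‖n‖ * ‖q‖) := by
      rw [hn1, one_mul, le_div_iff₀ hqpos]
      linarith [hyq]
    calc InnerProductGeometry.angle n q
        = Real.arccos (⟪n, q⟫ / (‖n‖ * ‖q‖)) := rfl
      _ ≤ Real.arccos (Real.cos dθ) := my_arccos_le_arccos h1
      _ = dθ := Real.arccos_cos hdθ0 hdθπ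
  have hangnn₀ : InnerProductGeometry.angle n n₀ = β := by
    have : InnerProductGeometry.angle n n₀ = Real.arccos (Real.cos β) := by
      rw [InnerProductGeometry.angle, hn1, hn₀1, hnn₀]
      norm_num
    rw [this, Real.arccos_cos hβ0 hβπ]
  have hq0' : ‖q‖ ≠ 0 := ne_of_gt hqpos
  have hn0' : ‖n‖ ≠ 0 := by rw [hn1]; norm_num
  have hp0' : ‖p‖ ≠ 0 := ne_of_gt hpn
  -- angle between q and n₀ is small
  have hangqn₀ : InnerProductGeometry.angle q n₀ < Real.pi / 2 - s₀ := by
    have h1 := angle_triangle' (E := EuclideanSpace ℝ (Fin d)) hq0' hn0' hn₀0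
    rw [angle_comm q n, hangnn₀] at h1
    linarith [hangnq, h1]
  -- hence the normal component of q is large
  set a := (⟪q, n₀⟫ : ℝ) with hadef
  have ha : ρ * ‖q‖ < a := by
    have h1 : Real.cos (Real.pi / 2 - s₀) < Real.cos (InnerProductGeometry.angle q n₀) := by
      apply Real.cos_lt_cos_of_nonneg_of_le_pi (angle_nonneg q n₀) _ hangqn₀
      have := Real.pi_pos
      linarith
    rw [Real.cos_pi_div_two_sub, hsins₀, cos_angle, hn₀1, mul_one] at h1
    exact (lt_div_iff₀ hqpos).mp h1
  -- the inner product with p is negative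
  have hangpn : InnerProductGeometry.angle p n = θ + β := by
    have h1 : InnerProductGeometry.angle p n = Real.arccos (Real.cos (θ + β)) := by
      rw [InnerProductGeometry.angle, hn1, real_inner_comm n p, hnp]
      rw [mul_one]
      congr 1
      field_simp
    rw [h1, Real.arccos_cos (by linarith) hθβu]
  have hpq : ⟪p, q⟫ < 0 := by
    have h1 := angle_triangle' (E := EuclideanSpace ℝ (Fin d)) hp0' hq0' hn0'
    rw [hangpn, angle_comm q n] at h1
    have h2 : Real.pi / 2 < InnerProductGeometry.angle p q := by
      linarith [hangnq]
    have h3 : Real.cos (InnerProductGeometry.angle p q) < 0 := by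
      apply Real.cos_neg_of_pi_div_two_lt_of_lt h2
      linarith [angle_le_pi p q, Real.pi_pos]
    rw [cos_angle] at h3
    by_contra h4
    push_neg at h4
    exact absurd (div_nonneg h4 (by positivity)) (not_le.mpr h3)
  have hφy : φ y ≤ φ x₀ := hpP y hyN hpq
  -- Taylor expansion
  obtain ⟨τ, hτ, hTay⟩ := taylor_two_aux φ hφ x₀ q
  have hx₀q : x₀ + q = y := by rw [hqdef]; abel
  set z := x₀ + τ • q with hzdef
  have hz : z ∈ Metric.closedBall x₀ h₀ := by
    rw [Metric.mem_closedBall, dist_eq_norm, hzdef, add_sub_cancel_left, norm_smul,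
      Real.norm_eq_abs, abs_of_pos hτ.1]
    exact le_trans (mul_le_of_le_one_left (norm_nonneg q) hτ.2.le) (hqh.trans hhh₀)
  have hfd : fderiv ℝ φ x₀ q = G * a := by
    have h1 : HasGradientAt φ g x₀ := (hφ.differentiable (by simp) x₀).hasGradientAt
    rw [h1.hasFDerivAt.fderiv]
    rw [InnerProductSpace.toDual_apply_apply, hgGn, real_inner_smul_left, real_inner_comm q n₀,
      ← hadef]
  -- decompose q
  set s₁ := ‖q - a • n₀‖ with hs₁def
  have hs₁0 : 0 ≤ s₁ := norm_nonneg _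
  have hqan₀ : ⟪q - a • n₀, n₀⟫ = 0 := by
    rw [inner_sub_left, real_inner_smul_left, hn₀n₀, mul_one, sub_self]
  have hqang : ⟪q - a • n₀, g⟫ = 0 := by
    rw [hgGn, real_inner_smul_right, hqan₀, mul_zero]
  set r := if q - a • n₀ = 0 then r₀ else s₁⁻¹ • (q - a • n₀) with hrdef
  have hr1 : ‖r‖ = 1 := by
    rw [hrdef]
    split_ifs with h'
    · exact hr₀1
    · rw [norm_smul, norm_inv, norm_norm, ← hs₁def, hs₁def,
        inv_mul_cancel₀ (norm_ne_zero_iff.mpr h')]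
  have hrg : ⟪r, g⟫ = 0 := by
    rw [hrdef]
    split_ifs with h'
    · exact hr₀g
    · rw [real_inner_smul_left, hqang, mul_zero]
  have hqdec2 : q = a • n₀ + s₁ • r := by
    rw [hrdef]
    split_ifs with h'
    · have : s₁ = 0 := by rw [hs₁def, h', norm_zero]
      rw [this, zero_smul, add_zero, ← sub_eq_zero, h']
    · rw [smul_smul, mul_inv_cancel₀ (by rw [hs₁def]; exact norm_ne_zero_iff.mpr h'), one_smul]
      abel
  have hs₁sq : s₁ ^ 2 = ‖q‖ ^ 2 - a ^ 2 := by
    rw [hs₁def, ← real_inner_self_eq_norm_sq]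
    simp only [inner_sub_left, inner_sub_right, real_inner_smul_left, real_inner_smul_right]
    rw [hn₀n₀, real_inner_self_eq_norm_sq, real_inner_comm q n₀, ← hadef]
    ring
  have hs₁q : s₁ ≤ ‖q‖ := by
    have h1 : s₁ ^ 2 ≤ ‖q‖ ^ 2 := by rw [hs₁sq]; linarith [sq_nonneg a]
    calc s₁ = Real.sqrt (s₁ ^ 2) := (Real.sqrt_sq hs₁0).symm
      _ ≤ Real.sqrt (‖q‖ ^ 2) := Real.sqrt_le_sqrt h1
      _ = ‖q‖ := Real.sqrt_sq (norm_nonneg q)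
  have haq : a ≤ ‖q‖ := by
    have h1 := abs_real_inner_le_norm q n₀
    rw [hn₀1, mul_one] at h1
    exact (le_abs_self a).trans h1
  have ha0 : 0 < a := lt_of_le_of_lt (by positivity) ha
  have hah : a ≤ h := haq.trans hqh
  have hs₁h : s₁ ≤ h := hs₁q.trans hqh
  -- expand the Hessian
  have hexp : iteratedFDeriv ℝ 2 φ z ![q, q]
      = a * a * iteratedFDeriv ℝ 2 φ z ![n₀, n₀]
        + a * s₁ * iteratedFDeriv ℝ 2 φ z ![n₀, r]
        + s₁ * a * iteratedFDeriv ℝ 2 φ z ![r, n₀]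
        + s₁ * s₁ * iteratedFDeriv ℝ 2 φ z ![r, r] := by
    rw [iteratedFDeriv_two_apply, iteratedFDeriv_two_apply, iteratedFDeriv_two_apply,
      iteratedFDeriv_two_apply, iteratedFDeriv_two_apply]
    simp only [Matrix.cons_val_zero, Matrix.cons_val_one, Matrix.head_cons]
    rw [hqdec2]
    simp only [map_add, map_smul, ContinuousLinearMap.add_apply, ContinuousLinearMap.smul_apply,
      smul_eq_mul]
    ring
  have hsymm : iteratedFDeriv ℝ 2 φ z ![r, n₀] = iteratedFDeriv ℝ 2 φ z ![n₀, r] := by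
    rw [iteratedFDeriv_two_apply, iteratedFDeriv_two_apply]
    simp only [Matrix.cons_val_zero, Matrix.cons_val_one, Matrix.head_cons]
    exact (hφ.contDiffAt.isSymmSndFDerivAt (by rw [minSmoothness_of_isRCLikeNormedField]; exact WithTop.coe_le_coe.mpr le_top)) r n₀
  have hb1 := hC₁ub z hz
  have hb2 := hC₂ub z hz r hr1 hrg
  have hb3 := hA₂ub z hz r hr1 hrg
  have eH : -(a * h * C₁) - 2 * (a * h * C₂) - s₁ * h * A₂ ≤ iteratedFDeriv ℝ 2 φ z ![q, q] := by
    rw [hexp, hsymm]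
    have l1 := (abs_le.mp hb1).1
    have l2 := (abs_le.mp hb2).1
    have l3 : -A₂ ≤ iteratedFDeriv ℝ 2 φ z ![r, r] := by linarith
    linarith [mul_le_mul_of_nonneg_left l1 (mul_nonneg ha0.le ha0.le),
      mul_le_mul_of_nonneg_left l2 (mul_nonneg ha0.le hs₁0),
      mul_le_mul_of_nonneg_left l3 (mul_nonneg hs₁0 hs₁0),
      mul_le_mul_of_nonneg_right (mul_le_mul_of_nonneg_left hah ha0.le) hC₁0,
      mul_le_mul_of_nonneg_right (mul_le_mul_of_nonneg_left hs₁h ha0.le) hC₂0,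
      mul_le_mul_of_nonneg_right (mul_le_mul_of_nonneg_left hs₁h hs₁0) hA₂0]
  -- the key strict inequality
  have hρD : ρ * (2 * G - h * (C₁ + 2 * C₂)) = A₂ * h := by
    rw [hρ, div_mul_cancel₀ _ (ne_of_gt hden)]
  have hkey : s₁ * (h * A₂) < a * (2 * G - h * (C₁ + 2 * C₂)) := by
    have h1 : ρ * s₁ ≤ ρ * ‖q‖ := mul_le_mul_of_nonneg_left hs₁q hρ0
    have h2 : ρ * s₁ < a := lt_of_le_of_lt h1 ha
    have h3 := mul_lt_mul_of_pos_right h2 hden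
    have h4 : s₁ * (h * A₂) = ρ * s₁ * (2 * G - h * (C₁ + 2 * C₂)) := by
      rw [mul_comm h A₂, ← hρD]; ring
    rw [h4]
    exact h3
  -- contradiction
  rw [hx₀q, hfd] at hTay
  have : (0 : ℝ) < φ y - φ x₀ := by
    rw [hTay]
    linarith [eH, hkey]
  linarith
end

section
/- Let ρ : ℝ^d → ℝ be a nonnegative Lipschitz function with Lipschitz constant L whose support is contained in the closed ball B(0, r). Then for every x ∈ B(0, r) and all unit vectors p, q ∈ ℝ^d, |∫_ℝ ρ(x + t p) dt − ∫_ℝ ρ(x + t q) dt| ≤ 4 L r² |p − q|. -/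
open MeasureTheory

/-- Lipschitz continuity in the direction of the line integral,
cf. Lemma 4.1 of the paper. For a nonnegative `L`-Lipschitz density `ρ` supported in
`B(0,r)`, `|∫_ℝ ρ(x+tp) dt − ∫_ℝ ρ(x+tq) dt| ≤ 4 L r² |p − q|` for unit vectors
`p, q` and `x ∈ B(0,r)`. -/
theorem stmt_15 {d : ℕ} (L : NNReal) (r : ℝ)
    (ρ : EuclideanSpace ℝ (Fin d) → ℝ)
    (hnn : ∀ z, 0 ≤ ρ z) (hlip : LipschitzWith L ρ)
    (hsupp : Function.support ρ ⊆ Metric.closedBall 0 r)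
    (x : EuclideanSpace ℝ (Fin d))
    (hx : x ∈ Metric.closedBall (0 : EuclideanSpace ℝ (Fin d)) r)
    (p q : EuclideanSpace ℝ (Fin d)) (hp : ‖p‖ = 1) (hq : ‖q‖ = 1) :
    |(∫ t : ℝ, ρ (x + t • p)) - (∫ t : ℝ, ρ (x + t • q))|
      ≤ 4 * (L : ℝ) * r ^ 2 * ‖p - q‖ := by
  have hxr : ‖x‖ ≤ r := by simpa using hx
  have hr : 0 ≤ r := le_trans (norm_nonneg x) hxr
  have hzero : ∀ z, r < ‖z‖ → ρ z = 0 := by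
    intro z hz
    by_contra h
    have hz2 := hsupp h
    simp only [Metric.mem_closedBall, dist_zero_right] at hz2
    linarith
  set a : ℝ := 2 * r with ha
  set s : Set ℝ := Set.Icc (-a) a with hs
  have key : ∀ v : EuclideanSpace ℝ (Fin d), ‖v‖ = 1 → ∀ t : ℝ, t ∉ s →
      ρ (x + t • v) = 0 := by
    intro v hv t ht
    apply hzero
    have habs : a < |t| := by
      simp only [hs, Set.mem_Icc, not_and_or, not_le] at ht
      rcases ht with h | h
      · calc a < -t := by linarith
          _ ≤ |t| := neg_le_abs t
      · exact lt_of_lt_of_le h (le_abs_self t)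
    have h2 : |t| ≤ ‖x + t • v‖ + ‖x‖ := by
      calc |t| = ‖t • v‖ := by simp [norm_smul, hv]
        _ = ‖(x + t • v) - x‖ := by congr 1; abel
        _ ≤ ‖x + t • v‖ + ‖x‖ := norm_sub_le _ _
    linarith
  have hcont : ∀ v : EuclideanSpace ℝ (Fin d),
      Continuous (fun t : ℝ => ρ (x + t • v)) := by
    intro v
    exact hlip.continuous.comp (by continuity)
  have hint : ∀ v : EuclideanSpace ℝ (Fin d), ‖v‖ = 1 →
      Integrable (fun t : ℝ => ρ (x + t • v)) := by
    intro v hv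
    apply (hcont v).integrable_of_hasCompactSupport
    exact HasCompactSupport.intro isCompact_Icc (key v hv)
  have heq : ∀ v : EuclideanSpace ℝ (Fin d), ‖v‖ = 1 →
      (∫ t : ℝ, ρ (x + t • v)) = ∫ t in s, ρ (x + t • v) := by
    intro v hv
    exact (setIntegral_eq_integral_of_forall_compl_eq_zero (fun t ht => key v hv t ht)).symm
  rw [heq p hp, heq q hq, ← integral_sub ((hint p hp).integrableOn)
    ((hint q hq).integrableOn)]
  have hbound : ∀ t : ℝ, |ρ (x + t • p) - ρ (x + t • q)| ≤ (L : ℝ) * ‖p - q‖ * |t| := by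
    intro t
    have := hlip.dist_le_mul (x + t • p) (x + t • q)
    rw [Real.dist_eq] at this
    have hd : dist (x + t • p) (x + t • q) = |t| * ‖p - q‖ := by
      rw [dist_eq_norm]
      have : (x + t • p) - (x + t • q) = t • (p - q) := by
        rw [smul_sub]; abel
      rw [this, norm_smul, Real.norm_eq_abs]
    rw [hd] at this
    calc |ρ (x + t • p) - ρ (x + t • q)| ≤ (L : ℝ) * (|t| * ‖p - q‖) := this
      _ = (L : ℝ) * ‖p - q‖ * |t| := by ring
  have habs : |∫ t in s, (ρ (x + t • p) - ρ (x + t • q))|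
      ≤ ∫ t in s, |ρ (x + t • p) - ρ (x + t • q)| := by
    simpa [Real.norm_eq_abs] using
      MeasureTheory.norm_integral_le_integral_norm (μ := volume.restrict s)
        (fun t : ℝ => ρ (x + t • p) - ρ (x + t • q))
  have hintabs : IntegrableOn (fun t : ℝ => |ρ (x + t • p) - ρ (x + t • q)|) s :=
    (((hint p hp).sub (hint q hq)).abs).integrableOn
  have hintmaj : IntegrableOn (fun t : ℝ => (L : ℝ) * ‖p - q‖ * |t|) s := by
    apply ContinuousOn.integrableOn_compact isCompact_Icc
    exact (continuous_const.mul (continuous_abs)).continuousOn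
  have hmono : (∫ t in s, |ρ (x + t • p) - ρ (x + t • q)|)
      ≤ ∫ t in s, (L : ℝ) * ‖p - q‖ * |t| := by
    apply setIntegral_mono_on hintabs hintmaj measurableSet_Icc
    intro t _
    exact hbound t
  have hcalc : (∫ t in s, |t|) = a ^ 2 := by
    rw [hs, MeasureTheory.integral_Icc_eq_integral_Ioc,
      ← intervalIntegral.integral_of_le (by linarith : -a ≤ a)]
    have h1 : (∫ t in (-a)..(0:ℝ), |t|) = a ^ 2 / 2 := by
      rw [intervalIntegral.integral_congr (g := fun t : ℝ => -t)
        (by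
          intro t ht
          rw [Set.uIcc_of_le (by linarith : -a ≤ (0:ℝ))] at ht
          exact abs_of_nonpos ht.2)]
      open intervalIntegral in rw [intervalIntegral.integral_neg, integral_id]
      ring
    have h2 : (∫ t in (0:ℝ)..a, |t|) = a ^ 2 / 2 := by
      rw [intervalIntegral.integral_congr (g := fun t : ℝ => t)
        (by
          intro t ht
          rw [Set.uIcc_of_le (by linarith : (0:ℝ) ≤ a)] at ht
          exact abs_of_nonneg ht.1)]
      open intervalIntegral in rw [integral_id]
      ring
    have := intervalIntegral.integral_add_adjacent_intervals
      (μ := volume) (a := -a) (b := 0) (c := a) (f := fun t : ℝ => |t|)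
      ((continuous_abs).intervalIntegrable _ _)
      ((continuous_abs).intervalIntegrable _ _)
    rw [← this, h1, h2]; ring
  have hfinal : (∫ t in s, (L : ℝ) * ‖p - q‖ * |t|) = (L : ℝ) * ‖p - q‖ * a ^ 2 := by
    rw [MeasureTheory.integral_const_mul, hcalc]
  calc |∫ t in s, (ρ (x + t • p) - ρ (x + t • q))|
      ≤ ∫ t in s, |ρ (x + t • p) - ρ (x + t • q)| := habs
    _ ≤ ∫ t in s, (L : ℝ) * ‖p - q‖ * |t| := hmono
    _ = (L : ℝ) * ‖p - q‖ * a ^ 2 := hfinal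
    _ = 4 * (L : ℝ) * r ^ 2 * ‖p - q‖ := by rw [ha]; ring
end
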